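/- Let μ and ν be probability distributions on a finite alphabet X with μ strictly positive and ν ≠ μ, let K be a Markov kernel from X to a finite alphabet Y with μK strictly positive, and fix α with 1 < α < ∞. For 0 < ε < 1 let ν_ε = μ + ε(ν − μ). Then lim_{ε ↓ 0} D_α(ν_ε K‖μK)/D_α(ν_ε‖μ) = χ²(νK‖μK)/χ²(ν‖μ). In particular, limsup_{ε ↓ 0} D_α(ν_ε K‖μK)/D_α(ν_ε‖μ) ≤ η_{χ²}(μ, K). -/

import Mathlib

open scoped BigOperators

noncomputable section

section Defs

variable {X Y : Type*} [Fintype X] [Fintype Y]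

/-- `μ` is a probability distribution on the finite alphabet `X`. -/
def IsProbDist (μ : X → ℝ) : Prop := (∀ x, 0 ≤ μ x) ∧ ∑ x, μ x = 1

/-- `K` is a Markov kernel (row-stochastic matrix) from `X` to `Y`. -/
def IsKernel (K : X → Y → ℝ) : Prop := (∀ x y, 0 ≤ K x y) ∧ ∀ x, ∑ y, K x y = 1

/-- Action of the kernel on a distribution: `(μK)(y) = ∑ₓ μ(x) K(y|x)`. -/
def push (μ : X → ℝ) (K : X → Y → ℝ) (y : Y) : ℝ := ∑ x, μ x * K x y

/-- Rényi divergence of order `α`: `D_α(ν‖μ) = (α-1)⁻¹ log ∑ₓ μ(x) (ν(x)/μ(x))^α`. -/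
def renyiD (α : ℝ) (ν μ : X → ℝ) : ℝ :=
  (α - 1)⁻¹ * Real.log (∑ x, μ x * (ν x / μ x) ^ α)

/-- χ²-divergence: `χ²(ν‖μ) = ∑ₓ (ν(x) - μ(x))²/μ(x)`. -/
def chiSq (ν μ : X → ℝ) : ℝ := ∑ x, (ν x - μ x) ^ 2 / μ x

/-- SDPI constant of the Rényi divergence of order `α` for the pair `(μ, K)`. -/
def etaAlpha (α : ℝ) (μ : X → ℝ) (K : X → Y → ℝ) : ℝ :=
  sSup {r : ℝ | ∃ ν : X → ℝ, IsProbDist ν ∧ ν ≠ μ ∧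
    r = renyiD α (push ν K) (push μ K) / renyiD α ν μ}

/-- SDPI constant of the χ²-divergence for the pair `(μ, K)`. -/
def etaChi (μ : X → ℝ) (K : X → Y → ℝ) : ℝ :=
  sSup {r : ℝ | ∃ ν : X → ℝ, IsProbDist ν ∧ ν ≠ μ ∧
    r = chiSq (push ν K) (push μ K) / chiSq ν μ}

end Defs

open Filter Set

/-- χ²-divergence is positive when `ν ≠ μ` and `μ` is strictly positive. -/
lemma chiSq_pos' {X : Type*} [Fintype X] (μ ν : X → ℝ) (hμpos : ∀ x, 0 < μ x)
    (hne : ν ≠ μ) : 0 < chiSq ν μ := by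
  obtain ⟨x0, hx0⟩ : ∃ x, ν x ≠ μ x := by
    by_contra h; push_neg at h; exact hne (funext h)
  refine Finset.sum_pos' (fun x _ => div_nonneg (sq_nonneg _) (hμpos x).le)
    ⟨x0, Finset.mem_univ _, ?_⟩
  have hx : ν x0 - μ x0 ≠ 0 := sub_ne_zero.2 hx0
  have : (0:ℝ) < (ν x0 - μ x0) ^ 2 := by positivity
  exact div_pos this (hμpos x0)

/-- Data processing inequality for the χ²-divergence. -/
lemma chiSq_push_le {X Y : Type*} [Fintype X] [Fintype Y]
    (μ ν : X → ℝ) (hμpos : ∀ x, 0 < μ x)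
    (K : X → Y → ℝ) (hK : IsKernel K) (hout : ∀ y, 0 < push μ K y) :
    chiSq (push ν K) (push μ K) ≤ chiSq ν μ := by
  have key : ∀ y, (push ν K y - push μ K y) ^ 2 / push μ K y
      ≤ ∑ x, (ν x - μ x) ^ 2 / μ x * K x y := by
    intro y
    rw [div_le_iff₀ (hout y)]
    have hdiff : push ν K y - push μ K y = ∑ x, (ν x - μ x) * K x y := by
      simp [push, ← Finset.sum_sub_distrib, sub_mul]
    rw [hdiff]
    have CS := Finset.sum_mul_sq_le_sq_mul_sq Finset.univ
      (fun x => Real.sqrt (μ x * K x y))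
      (fun x => (ν x - μ x) * Real.sqrt (K x y / μ x))
    have h1 : ∀ x, Real.sqrt (μ x * K x y) * ((ν x - μ x) * Real.sqrt (K x y / μ x))
        = (ν x - μ x) * K x y := by
      intro x
      rw [mul_left_comm, ← Real.sqrt_mul (mul_nonneg (hμpos x).le (hK.1 x y))]
      have : μ x * K x y * (K x y / μ x) = K x y ^ 2 := by
        rw [mul_comm (μ x) (K x y), mul_assoc, mul_div_assoc',
          mul_div_cancel_left₀ _ (hμpos x).ne', sq]
      rw [this, Real.sqrt_sq (hK.1 x y)]
    have h2 : ∀ x, Real.sqrt (μ x * K x y) ^ 2 = μ x * K x y := fun x =>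
      Real.sq_sqrt (mul_nonneg (hμpos x).le (hK.1 x y))
    have h3 : ∀ x, ((ν x - μ x) * Real.sqrt (K x y / μ x)) ^ 2
        = (ν x - μ x) ^ 2 / μ x * K x y := by
      intro x
      rw [mul_pow, Real.sq_sqrt (div_nonneg (hK.1 x y) (hμpos x).le)]
      ring
    calc (∑ x, (ν x - μ x) * K x y) ^ 2
        = (∑ x, Real.sqrt (μ x * K x y) * ((ν x - μ x) * Real.sqrt (K x y / μ x))) ^ 2 := by
          rw [Finset.sum_congr rfl fun x _ => (h1 x).symm]
      _ ≤ (∑ x, Real.sqrt (μ x * K x y) ^ 2) * ∑ x, ((ν x - μ x) * Real.sqrt (K x y / μ x)) ^ 2 :=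
          CS
      _ = (∑ x, (ν x - μ x) ^ 2 / μ x * K x y) * push μ K y := by
          rw [Finset.sum_congr rfl fun x _ => h2 x, Finset.sum_congr rfl fun x _ => h3 x]
          rw [push, mul_comm]
  calc chiSq (push ν K) (push μ K) ≤ ∑ y, ∑ x, (ν x - μ x) ^ 2 / μ x * K x y :=
        Finset.sum_le_sum fun y _ => key y
    _ = ∑ x, (ν x - μ x) ^ 2 / μ x * ∑ y, K x y := by
        rw [Finset.sum_comm]; simp [Finset.mul_sum]
    _ = chiSq ν μ := by simp [hK.2, chiSq]

/-- Key asymptotic: `D_α(μ + ε(ρ-μ) ‖ μ)/ε² → (α/2) χ²(ρ‖μ)` as `ε → 0⁺`. -/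
lemma renyi_over_sq_tendsto {A : Type*} [Fintype A]
    (μ ρ : A → ℝ) (hμ : IsProbDist μ) (hρ : IsProbDist ρ) (hμpos : ∀ a, 0 < μ a)
    (α : ℝ) (hα : 1 < α) :
    Filter.Tendsto (fun ε : ℝ => renyiD α (fun a => μ a + ε * (ρ a - μ a)) μ / ε ^ 2)
      (nhdsWithin 0 (Set.Ioi 0)) (nhds (α / 2 * chiSq ρ μ)) := by
  set f : A → ℝ := fun a => (ρ a - μ a) / μ a with hf
  set g : ℝ → ℝ := fun ε => ∑ a, μ a * (1 + ε * f a) ^ α with hg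
  set g1 : ℝ → ℝ := fun ε => ∑ a, μ a * (f a * α * (1 + ε * f a) ^ (α - 1)) with hg1
  have hα0 : (0:ℝ) < α := lt_trans one_pos hα
  have hα1 : α - 1 ≠ 0 := sub_ne_zero.2 (ne_of_gt hα)
  -- base positivity
  have hbase : ∀ ε ∈ Ico (0:ℝ) 1, ∀ a, 0 < 1 + ε * f a := by
    intro ε hε a
    have hmul : (1 + ε * f a) * μ a = (1 - ε) * μ a + ε * ρ a := by
      rw [hf]
      simp only []
      rw [add_mul, one_mul, mul_assoc, div_mul_cancel₀ _ (hμpos a).ne']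
      ring
    have h1 : 0 < (1 - ε) * μ a := mul_pos (by linarith [hε.2]) (hμpos a)
    have h2 : 0 ≤ ε * ρ a := mul_nonneg hε.1 (hρ.1 a)
    have hpos : 0 < (1 + ε * f a) * μ a := by rw [hmul]; linarith
    nlinarith [hμpos a]
  have g0 : g 0 = 1 := by
    simp only [hg, zero_mul, add_zero, Real.one_rpow, mul_one]
    exact hμ.2
  have g10 : g1 0 = 0 := by
    have : g1 0 = α * ∑ a, (ρ a - μ a) := by
      simp only [hg1, zero_mul, add_zero, Real.one_rpow, mul_one, Finset.mul_sum]
      refine Finset.sum_congr rfl fun a _ => ?_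
      have := (hμpos a).ne'
      simp only [hf]; field_simp
    rw [this, Finset.sum_sub_distrib, hρ.2, hμ.2, sub_self, mul_zero]
  -- derivative of g everywhere
  have hgε : ∀ ε : ℝ, HasDerivAt g (g1 ε) ε := by
    intro ε
    apply HasDerivAt.fun_sum
    intro a _
    have hu : HasDerivAt (fun t : ℝ => 1 + t * f a) (f a) ε :=
      (hasDerivAt_mul_const (f a)).const_add 1
    exact (hu.rpow_const (Or.inr hα.le)).const_mul (μ a)
  have gpos : ∀ ε ∈ Ico (0:ℝ) 1, 0 < g ε := by
    intro ε hε
    obtain ⟨a0⟩ : Nonempty A := by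
      by_contra h
      rw [not_nonempty_iff] at h
      have := hμ.2
      simp [Finset.univ_eq_empty] at this
    apply Finset.sum_pos (fun a _ => ?_) ⟨a0, Finset.mem_univ a0⟩
    exact mul_pos (hμpos a) (Real.rpow_pos_of_pos (hbase ε hε a) α)
  -- derivative of g1 at 0 within Ici 0
  set c2 : ℝ := α * (α - 1) * chiSq ρ μ with hc2
  have hg1d : HasDerivWithinAt g1 c2 (Ici 0) 0 := by
    have hraw : HasDerivWithinAt g1
        (∑ a, μ a * (f a * α * (f a * (α - 1) * (1 + 0 * f a) ^ (α - 1 - 1)))) (Ici 0) 0 := by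
      apply HasDerivWithinAt.fun_sum
      intro a _
      have hu : HasDerivWithinAt (fun t : ℝ => 1 + t * f a) (f a) (Ici 0) 0 :=
        ((hasDerivAt_mul_const (f a)).const_add 1).hasDerivWithinAt
      have hb : (1 : ℝ) + 0 * f a ≠ 0 := by norm_num
      exact ((hu.rpow_const (Or.inl hb)).const_mul (f a * α)).const_mul (μ a)
    convert hraw using 1
    rw [hc2, chiSq, Finset.mul_sum]
    refine Finset.sum_congr rfl fun a _ => ?_
    have := (hμpos a).ne'
    simp only [zero_mul, add_zero, Real.one_rpow, mul_one]
    simp only [hf]; field_simp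
  -- derivative of h' = g1/g at 0 within Ici 0
  have hgd0 : HasDerivWithinAt g (g1 0) (Ici 0) 0 := (hgε 0).hasDerivWithinAt
  have hg0ne : g 0 ≠ 0 := by rw [g0]; norm_num
  have hquot : HasDerivWithinAt (fun ε => g1 ε / g ε) c2 (Ici 0) 0 := by
    have := hg1d.fun_div hgd0 hg0ne
    rw [g0, g10, mul_one, mul_zero, sub_zero, one_pow, div_one] at this
    exact this
  -- the log function
  set h : ℝ → ℝ := fun ε => Real.log (g ε) with hh
  have hh0 : Tendsto h (nhdsWithin 0 (Ioi 0)) (nhds 0) := by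
    have hcont : ContinuousAt h 0 :=
      (Real.continuousAt_log hg0ne).comp (hgε 0).continuousAt
    have h00 : h 0 = 0 := by rw [hh]; simp [g0]
    have := hcont.tendsto
    rw [h00] at this
    exact this.mono_left nhdsWithin_le_nhds
  -- L'Hopital
  have hslope : Tendsto (fun ε => (g1 ε / g ε) / (2 * ε)) (nhdsWithin 0 (Ioi 0))
      (nhds (c2 / 2)) := by
    have hsl := hasDerivWithinAt_iff_tendsto_slope.1 hquot
    rw [Set.Ici_sdiff_left] at hsl
    have := hsl.div_const 2
    refine this.congr' ?_
    filter_upwards [self_mem_nhdsWithin] with ε (hε : ε ∈ Ioi 0)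
    have hε0 : ε ≠ 0 := ne_of_gt hε
    rw [slope_def_field, g10, g0]
    field_simp
    ring
  have hlhop : Tendsto (fun ε => h ε / ε ^ 2) (nhdsWithin 0 (Ioi 0)) (nhds (c2 / 2)) := by
    apply HasDerivAt.lhopital_zero_right_on_Ioo (f' := fun ε => g1 ε / g ε)
      (g' := fun ε => 2 * ε) one_pos
    · intro x hx
      exact (hgε x).log (gpos x ⟨le_of_lt hx.1, hx.2⟩).ne'
    · intro x _
      have := hasDerivAt_pow 2 x
      simpa using this
    · intro x hx
      have : (0:ℝ) < 2 * x := by linarith [hx.1]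
      exact this.ne'
    · exact hh0
    · have : Tendsto (fun ε : ℝ => ε ^ 2) (nhds 0) (nhds 0) := by
        have := (continuous_pow 2).tendsto (0:ℝ)
        simpa using this
      exact this.mono_left nhdsWithin_le_nhds
    · exact hslope
  -- convert to renyiD
  have hsum : ∀ ε : ℝ, (∑ a, μ a * ((μ a + ε * (ρ a - μ a)) / μ a) ^ α) = g ε := by
    intro ε
    refine Finset.sum_congr rfl fun a _ => ?_
    congr 2
    rw [add_div, div_self (hμpos a).ne', mul_div_assoc, hf]
  have heq : ∀ ε : ℝ, renyiD α (fun a => μ a + ε * (ρ a - μ a)) μ = (α - 1)⁻¹ * h ε := by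
    intro ε
    simp only [renyiD, hh]
    rw [hsum ε]
  have final := hlhop.const_mul ((α - 1)⁻¹)
  have hval : (α - 1)⁻¹ * (c2 / 2) = α / 2 * chiSq ρ μ := by
    rw [hc2]; field_simp
  rw [hval] at final
  refine final.congr fun ε => ?_
  rw [heq ε, mul_div_assoc]

/-- Along the segment `ν_ε = μ + ε(ν - μ)`, the ratio of Rényi divergences
converges to the ratio of χ²-divergences:
`lim_{ε ↓ 0} D_α(ν_ε K‖μK)/D_α(ν_ε‖μ) = χ²(νK‖μK)/χ²(ν‖μ)`; in particular the
`limsup` is bounded by `η_{χ²}(μ, K)`. -/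
theorem renyi_ratio_tendsto_chiSq_ratio
    {X Y : Type*} [Fintype X] [Fintype Y]
    (μ ν : X → ℝ) (hμ : IsProbDist μ) (hν : IsProbDist ν)
    (hμpos : ∀ x, 0 < μ x) (hne : ν ≠ μ)
    (K : X → Y → ℝ) (hK : IsKernel K) (hout : ∀ y, 0 < push μ K y)
    (α : ℝ) (hα : 1 < α) :
    Filter.Tendsto
        (fun ε : ℝ =>
          renyiD α (push (fun x => μ x + ε * (ν x - μ x)) K) (push μ K) /
            renyiD α (fun x => μ x + ε * (ν x - μ x)) μ)
        (nhdsWithin 0 (Set.Ioi 0))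
        (nhds (chiSq (push ν K) (push μ K) / chiSq ν μ))
      ∧ Filter.limsup
          (fun ε : ℝ =>
            renyiD α (push (fun x => μ x + ε * (ν x - μ x)) K) (push μ K) /
              renyiD α (fun x => μ x + ε * (ν x - μ x)) μ)
          (nhdsWithin 0 (Set.Ioi 0)) ≤ etaChi μ K := by
  have hα0 : (0:ℝ) < α := lt_trans one_pos hα
  -- push distributions
  have hpushprob : ∀ ρ : X → ℝ, IsProbDist ρ → IsProbDist (push ρ K) := by
    intro ρ hρ
    constructor
    · intro y
      exact Finset.sum_nonneg fun x _ => mul_nonneg (hρ.1 x) (hK.1 x y)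
    · simp only [push]
      rw [Finset.sum_comm]
      simp [← Finset.mul_sum, hK.2, hρ.2]
  have hμK : IsProbDist (push μ K) := hpushprob μ hμ
  have hνK : IsProbDist (push ν K) := hpushprob ν hν
  have hlin : ∀ ε : ℝ, (fun y => push μ K y + ε * (push ν K y - push μ K y))
      = push (fun x => μ x + ε * (ν x - μ x)) K := by
    intro ε; funext y
    simp only [push, ← Finset.sum_sub_distrib, Finset.mul_sum, ← Finset.sum_add_distrib]
    exact Finset.sum_congr rfl fun x _ => by ring
  have hnum := renyi_over_sq_tendsto (push μ K) (push ν K) hμK hνK hout α hα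
  have hnum' : Filter.Tendsto
      (fun ε : ℝ => renyiD α (push (fun x => μ x + ε * (ν x - μ x)) K) (push μ K) / ε ^ 2)
      (nhdsWithin 0 (Set.Ioi 0)) (nhds (α / 2 * chiSq (push ν K) (push μ K))) := by
    refine hnum.congr fun ε => ?_
    rw [hlin ε]
  have hden := renyi_over_sq_tendsto μ ν hμ hν hμpos α hα
  have hc : 0 < chiSq ν μ := chiSq_pos' μ ν hμpos hne
  have hdlim : α / 2 * chiSq ν μ ≠ 0 := by positivity
  have hratio := hnum'.div hden hdlim
  have hval : α / 2 * chiSq (push ν K) (push μ K) / (α / 2 * chiSq ν μ)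
      = chiSq (push ν K) (push μ K) / chiSq ν μ :=
    mul_div_mul_left _ _ (by positivity)
  rw [hval] at hratio
  have hTend : Filter.Tendsto
      (fun ε : ℝ =>
        renyiD α (push (fun x => μ x + ε * (ν x - μ x)) K) (push μ K) /
          renyiD α (fun x => μ x + ε * (ν x - μ x)) μ)
      (nhdsWithin 0 (Set.Ioi 0))
      (nhds (chiSq (push ν K) (push μ K) / chiSq ν μ)) := by
    refine hratio.congr' ?_
    filter_upwards [self_mem_nhdsWithin] with ε (hε : ε ∈ Set.Ioi 0)
    have hε2 : (ε : ℝ) ^ 2 ≠ 0 := pow_ne_zero 2 (ne_of_gt hε)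
    simp only [Pi.div_apply]
    rw [div_div_div_cancel_right₀]
    exact hε2
  refine ⟨hTend, ?_⟩
  rw [hTend.limsup_eq]
  apply le_csSup
  · refine ⟨1, ?_⟩
    rintro r ⟨ν', hν', hne', rfl⟩
    have hc' := chiSq_pos' μ ν' hμpos hne'
    exact (div_le_one hc').2 (chiSq_push_le μ ν' hμpos K hK hout)
  · exact ⟨ν, hν, hne, rfl⟩
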